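/- arXiv:math/0301371 — 4 statements merged into one kernel-verified Lean document; each statement's English description precedes it below -/
import Mathlib

section
/- Let V be a finite-dimensional real vector space of odd dimension, let L be a one-dimensional real vector space, and let B : V → V → L be a symmetric bilinear map that is nondegenerate (its radical is zero). Then there exists a unique ray of L with the following property: for every linear functional φ : L → ℝ that takes positive values on that ray, there is a linear subspace W of V with 2 · dim W > dim V on which the real symmetric bilinear form (v, w) ↦ φ(B v w) is positive definite. -/
/-!
For a nonzero `φ : L → ℝ` the quadratic form `w ↦ φ (B w w)` is nondegenerate, so by Sylvester's
law of inertia its positive and negative indices add up to the odd number `dim V`: exactly one of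
`φ` and `-φ` has a positive definite subspace of more than half the dimension. As `L` is a line,
such a sign choice on the nonzero functionals of `L` singles out one of its two rays.
-/

open Module

section Signature

variable {𝕜 M : Type*} [Field 𝕜] [LinearOrder 𝕜] [AddCommGroup M] [Module 𝕜 M]
  [FiniteDimensional 𝕜 M]

lemma exists_posDef_subspace_two_mul_finrank_gt_iff (Q : QuadraticForm 𝕜 M) :
    (∃ W : Submodule 𝕜 M, 2 * finrank 𝕜 W > finrank 𝕜 M ∧ ∀ w ∈ W, w ≠ 0 → 0 < Q w) ↔
      finrank 𝕜 M < 2 * sigPos Q := by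
  constructor
  · rintro ⟨W, hW, hpos⟩
    have := le_sigPos_of_posDef Q (V := W) fun w hw ↦ hpos w w.2 (by simpa using hw)
    omega
  · obtain ⟨W, hW, hpos⟩ := exists_finrank_eq_sigPos_and_posDef Q
    exact fun h ↦ ⟨W, hW ▸ h, fun w hw hw0 ↦ hpos ⟨w, hw⟩ (by simpa using hw0)⟩

lemma lt_two_mul_sigNeg_iff_not_lt_two_mul_sigPos [IsStrictOrderedRing 𝕜] {Q : QuadraticForm 𝕜 M}
    (hQ : Q.radical = ⊥) (hodd : Odd (finrank 𝕜 M)) :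
    finrank 𝕜 M < 2 * sigNeg Q ↔ ¬ finrank 𝕜 M < 2 * sigPos Q := by
  have := QuadraticForm.sigPos_add_sigNeg_add_radical (Q := Q)
  rw [hQ, finrank_bot, add_zero] at this
  obtain ⟨k, hk⟩ := hodd
  omega

end Signature

lemma LinearMap.BilinForm.radical_toQuadraticMap_eq_bot {R M : Type*} [CommRing R]
    [Invertible (2 : R)] [AddCommGroup M] [Module R M] {F : LinearMap.BilinForm R M}
    (hF : F.IsSymm) (hsep : F.SeparatingLeft) : F.toQuadraticMap.radical = ⊥ := by
  rw [QuadraticMap.radical_eq_ker_associated, QuadraticMap.associated_left_inverse R hF.eq,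
    ← LinearMap.separatingLeft_iff_ker_eq_bot]
  exact hsep

section Line

variable {𝕜 L : Type*} [Field 𝕜] [AddCommGroup L] [Module 𝕜 L]

lemma LinearMap.apply_ne_zero_of_finrank_eq_one (hL : finrank 𝕜 L = 1) {ψ : L →ₗ[𝕜] 𝕜}
    (hψ : ψ ≠ 0) {x : L} (hx : x ≠ 0) : ψ x ≠ 0 := by
  intro h
  apply hψ
  ext z
  obtain ⟨c, rfl⟩ := (finrank_eq_one_iff_of_nonzero' x hx).1 hL z
  simp [h]

lemma LinearMap.eq_smul_of_finrank_eq_one (hL : finrank 𝕜 L = 1) (φ ψ : L →ₗ[𝕜] 𝕜) {y : L}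
    (hψy : ψ y ≠ 0) : φ = (φ y / ψ y) • ψ := by
  have hy : y ≠ 0 := by rintro rfl; simp at hψy
  ext z
  obtain ⟨c, rfl⟩ := (finrank_eq_one_iff_of_nonzero' y hy).1 hL z
  simp only [map_smul, smul_eq_mul, LinearMap.smul_apply]
  field_simp

variable [LinearOrder 𝕜] [IsStrictOrderedRing 𝕜]

lemma forall_rayOfNeZero_eq_imp_pos_iff (φ : L →ₗ[𝕜] 𝕜) {y : L} (hy : y ≠ 0) :
    (∀ (x : L) (hx : x ≠ 0), rayOfNeZero 𝕜 x hx = rayOfNeZero 𝕜 y hy → 0 < φ x) ↔ 0 < φ y := by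
  refine ⟨fun h ↦ h y hy rfl, fun hφy x hx hxy ↦ ?_⟩
  obtain ⟨a, b, ha, hb, hab⟩ := ((ray_eq_iff hx hy).1 hxy).exists_pos hx hy
  have : a * φ x = b * φ y := by simpa using congrArg φ hab
  exact pos_of_mul_pos_right (this ▸ mul_pos hb hφy) ha.le

lemma sameRay_of_finrank_eq_one (hL : finrank 𝕜 L = 1) {ψ : L →ₗ[𝕜] 𝕜} {x y : L}
    (hx : 0 < ψ x) (hy : 0 < ψ y) : SameRay 𝕜 x y := by
  have hy0 : y ≠ 0 := by rintro rfl; simp at hy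
  obtain ⟨c, rfl⟩ := (finrank_eq_one_iff_of_nonzero' y hy0).1 hL x
  rw [map_smul, smul_eq_mul] at hx
  exact SameRay.sameRay_pos_smul_left y (pos_of_mul_pos_left hx hy.le)

theorem existsUnique_ray_of_finrank_eq_one (hL : finrank 𝕜 L = 1) (p : (L →ₗ[𝕜] 𝕜) → Prop)
    (hsmul : ∀ φ {c : 𝕜}, 0 < c → p φ → p (c • φ))
    (hneg : ∀ φ, φ ≠ 0 → (p (-φ) ↔ ¬ p φ)) :
    ∃! r : Module.Ray 𝕜 L,
      ∀ φ, (∀ (x : L) (hx : x ≠ 0), rayOfNeZero 𝕜 x hx = r → 0 < φ x) → p φ := by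
  obtain ⟨ψ, y, hψ, hψy⟩ : ∃ (ψ : L →ₗ[𝕜] 𝕜) (y : L), p ψ ∧ 0 < ψ y := by
    have := finite_of_finrank_eq_succ hL
    let b := finBasisOfFinrankEq 𝕜 L hL
    have hb : b.coord 0 (b 0) = 1 := by simp
    have hb0 : b.coord 0 ≠ 0 := fun h ↦ by simp [h] at hb
    by_cases h : p (b.coord 0)
    · exact ⟨_, _, h, hb ▸ one_pos⟩
    · exact ⟨_, -b 0, (hneg _ hb0).2 h, by simp⟩
  have hy : y ≠ 0 := by rintro rfl; simp at hψy
  have hψ0 : ψ ≠ 0 := by rintro rfl; simp at hψy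
  refine ⟨rayOfNeZero 𝕜 y hy, fun φ hφ ↦ ?_, fun r hr ↦ ?_⟩
  · rw [forall_rayOfNeZero_eq_imp_pos_iff φ hy] at hφ
    rw [LinearMap.eq_smul_of_finrank_eq_one hL φ ψ hψy.ne']
    exact hsmul ψ (div_pos hφ hψy) hψ
  · induction r using Module.Ray.ind with | h y' hy' => ?_
    simp only [forall_rayOfNeZero_eq_imp_pos_iff _ hy'] at hr
    rcases (ψ.apply_ne_zero_of_finrank_eq_one hL hψ0 hy').lt_or_gt with hψy' | hψy'
    · exact absurd hψ ((hneg ψ hψ0).1 (hr (-ψ) (by simpa using hψy')))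
    · exact (ray_eq_iff hy' hy).2 (sameRay_of_finrank_eq_one hL hψy' hψy)

end Line

/-- Let `V` be a finite-dimensional real vector space of odd
dimension, `L` a one-dimensional real vector space, and `B : V → V → L` a
symmetric bilinear map whose radical is zero.  Then there is a unique ray of
`L` such that every linear functional `φ : L → ℝ` positive on that ray makes
`(v, w) ↦ φ (B v w)` positive definite on some subspace `W` of `V` with
`2 * dim W > dim V`. -/
theorem stmt0
    (V L : Type*) [AddCommGroup V] [Module ℝ V] [FiniteDimensional ℝ V]
    [AddCommGroup L] [Module ℝ L]
    (hV : Odd (Module.finrank ℝ V))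
    (hL : Module.finrank ℝ L = 1)
    (B : V →ₗ[ℝ] V →ₗ[ℝ] L)
    (hsymm : ∀ v w : V, B v w = B w v)
    (hnondeg : ∀ v : V, B v = 0 → v = 0) :
    ∃! r : Module.Ray ℝ L,
      ∀ φ : L →ₗ[ℝ] ℝ,
        (∀ (x : L) (hx : x ≠ 0), rayOfNeZero ℝ x hx = r → 0 < φ x) →
        ∃ W : Submodule ℝ V,
          2 * Module.finrank ℝ W > Module.finrank ℝ V ∧
          ∀ w ∈ W, w ≠ 0 → 0 < φ (B w w) := by
  refine existsUnique_ray_of_finrank_eq_one hL _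
    (fun φ c hc ⟨W, hW, hpos⟩ ↦ ⟨W, hW, fun w hw hw0 ↦ ?_⟩) (fun φ hφ ↦ ?_)
  · simpa using mul_pos hc (hpos w hw hw0)
  · have hsep : (B.compr₂ φ).SeparatingLeft := fun x hx ↦
      hnondeg x <| LinearMap.ext fun y ↦ by_contra fun h ↦
        φ.apply_ne_zero_of_finrank_eq_one hL hφ h (hx y)
    have hrad := LinearMap.BilinForm.radical_toQuadraticMap_eq_bot
      ⟨fun x y ↦ by simp [hsymm x y]⟩ hsep
    have hQneg : LinearMap.BilinMap.toQuadraticMap (B.compr₂ (-φ)) =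
        -LinearMap.BilinMap.toQuadraticMap (B.compr₂ φ) := by
      ext; simp
    have hsig := lt_two_mul_sigNeg_iff_not_lt_two_mul_sigPos hrad hV
    rw [← sigPos_neg, ← hQneg, ← exists_posDef_subspace_two_mul_finrank_gt_iff,
      ← exists_posDef_subspace_two_mul_finrank_gt_iff] at hsig
    exact hsig
end

section
/- Let V be a finite-dimensional real vector space, L a one-dimensional real vector space, B : V → V → L a symmetric bilinear map, and K = {v ∈ V | B v = 0} its radical. Then the restriction map from the space of linear maps V → L to the space of linear maps K → L (sending f to its restriction f|_K) is surjective, and its kernel is exactly the range of the linear map V → Hom(V, L) induced by B. Consequently, the cokernel Hom(V, L) / range(B) is linearly isomorphic to Hom(K, L). -/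
/-- Let `V` be a finite-dimensional real vector space, `L` a
one-dimensional real vector space, `B : V → V → L` a symmetric bilinear map
and `K = {v | B v = 0}` its radical.  Then the restriction map
`Hom(V, L) → Hom(K, L)` is surjective with kernel exactly the range of
`B : V → Hom(V, L)`; consequently `Hom(V, L) ⧸ range B ≃ Hom(K, L)`. -/
theorem stmt2
    (V L : Type*) [AddCommGroup V] [Module ℝ V] [FiniteDimensional ℝ V]
    [AddCommGroup L] [Module ℝ L]
    (hL : Module.finrank ℝ L = 1)
    (B : V →ₗ[ℝ] V →ₗ[ℝ] L)
    (hsymm : ∀ v w : V, B v w = B w v)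
    (K : Submodule ℝ V) (hK : K = LinearMap.ker B) :
    Function.Surjective (LinearMap.domRestrict' (M₂ := L) K) ∧
    LinearMap.ker (LinearMap.domRestrict' (M₂ := L) K) = LinearMap.range B ∧
    Nonempty (((V →ₗ[ℝ] L) ⧸ LinearMap.range B) ≃ₗ[ℝ] (K →ₗ[ℝ] L)) := by
  have hLfin : FiniteDimensional ℝ L := FiniteDimensional.of_finrank_pos (by omega)
  -- surjectivity
  have hsurj : Function.Surjective (LinearMap.domRestrict' (M₂ := L) K) := by
    intro g
    obtain ⟨f, hf⟩ := g.exists_extend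
    exact ⟨f, hf⟩
  -- inclusion range B ≤ ker restriction
  have hsub : LinearMap.range B ≤ LinearMap.ker (LinearMap.domRestrict' (M₂ := L) K) := by
    rintro f ⟨v, rfl⟩
    rw [LinearMap.mem_ker]
    ext ⟨k, hk⟩
    have hk0 : B k = 0 := by rw [hK] at hk; exact hk
    simp [LinearMap.domRestrict', hsymm v k, hk0]
  -- finrank computations
  have hrk1 : Module.finrank ℝ (LinearMap.ker (LinearMap.domRestrict' (M₂ := L) K))
      = Module.finrank ℝ (LinearMap.range B) := by
    have e1 := (LinearMap.domRestrict' (M₂ := L) (R := ℝ) K).finrank_range_add_finrank_ker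
    have e2 := B.finrank_range_add_finrank_ker
    rw [LinearMap.range_eq_top.mpr hsurj, finrank_top] at e1
    rw [← hK] at e2
    rw [Module.finrank_linearMap, hL, mul_one] at e1
    rw [Module.finrank_linearMap, hL, mul_one] at e1
    omega
  have hker : LinearMap.ker (LinearMap.domRestrict' (M₂ := L) K) = LinearMap.range B :=
    (Submodule.eq_of_le_of_finrank_le hsub (le_of_eq hrk1)).symm
  refine ⟨hsurj, hker, ⟨?_⟩⟩
  exact (Submodule.quotEquivOfEq _ _ hker.symm).trans
    (LinearMap.quotKerEquivOfSurjective _ hsurj)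
end

section
/- Let A and B be commutative rings, I an ideal of A, J an ideal of B, k ≥ 1 an integer, and π : B → B ⧸ J^(k+1) the quotient map. Let f : I → B ⧸ J^(k+1) be an additive and multiplicative map whose image is contained in the image π(J) of J, and let h : I → B ⧸ J^(k+1) be an additive map whose image is contained in π(J^k) and which vanishes on all products: h(a·b) = 0 for all a, b ∈ I. Then the sum f + h is additive and multiplicative: (f+h)(a+b) = (f+h)(a) + (f+h)(b) and (f+h)(a·b) = (f+h)(a) · (f+h)(b) for all a, b ∈ I. -/
/-- Let `A`, `B` be commutative rings, `I ⊆ A`, `J ⊆ B`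
ideals, `k ≥ 1`, and `π : B → B ⧸ J^(k+1)` the quotient map.  If
`f : I → B ⧸ J^(k+1)` is additive and multiplicative with image in `π(J)`,
and `h : I → B ⧸ J^(k+1)` is additive with image in `π(J^k)` and vanishes on
all products, then `f + h` is additive and multiplicative. -/
theorem stmt5
    (A B : Type*) [CommRing A] [CommRing B]
    (I : Ideal A) (J : Ideal B) (k : ℕ) (hk : 1 ≤ k)
    (f h : ↥I → B ⧸ J ^ (k + 1))
    (hf_add : ∀ a b : ↥I, f (a + b) = f a + f b)
    (hf_mul : ∀ a b : ↥I,
      f ⟨(a : A) * (b : A), I.mul_mem_left (a : A) b.2⟩ = f a * f b)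
    (hf_im : ∀ a : ↥I, f a ∈ (Ideal.Quotient.mk (J ^ (k + 1))) '' (J : Set B))
    (hh_add : ∀ a b : ↥I, h (a + b) = h a + h b)
    (hh_im : ∀ a : ↥I, h a ∈ (Ideal.Quotient.mk (J ^ (k + 1))) '' ((J ^ k : Ideal B) : Set B))
    (hh_prod : ∀ a b : ↥I,
      h ⟨(a : A) * (b : A), I.mul_mem_left (a : A) b.2⟩ = 0) :
    (∀ a b : ↥I, (f + h) (a + b) = (f + h) a + (f + h) b) ∧
    (∀ a b : ↥I,
      (f + h) ⟨(a : A) * (b : A), I.mul_mem_left (a : A) b.2⟩ =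
        (f + h) a * (f + h) b) := by
  constructor
  · intro a b
    simp only [Pi.add_apply, hf_add, hh_add]
    ring
  · intro a b
    have key : ∀ (m n : ℕ) (x y : B ⧸ J ^ (k+1)),
        x ∈ (Ideal.Quotient.mk (J ^ (k + 1))) '' ((J ^ m : Ideal B) : Set B) →
        y ∈ (Ideal.Quotient.mk (J ^ (k + 1))) '' ((J ^ n : Ideal B) : Set B) →
        k + 1 ≤ m + n → x * y = 0 := by
      rintro m n x y ⟨u, hu, rfl⟩ ⟨v, hv, rfl⟩ hmn
      rw [← map_mul, Ideal.Quotient.eq_zero_iff_mem]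
      exact Ideal.pow_le_pow_right hmn (by rw [pow_add]; exact Ideal.mul_mem_mul hu hv)
    have hf1 : ∀ a : ↥I, f a ∈ (Ideal.Quotient.mk (J ^ (k + 1))) '' ((J ^ 1 : Ideal B) : Set B) := by
      intro a; simpa using hf_im a
    simp only [Pi.add_apply, hf_mul, hh_prod]
    have e : (f a + h a) * (f b + h b) =
        f a * f b + (f a * h b + h a * f b + h a * h b) := by ring
    rw [e, key 1 k (f a) (h b) (hf1 a) (hh_im b) (by omega),
        key k 1 (h a) (f b) (hh_im a) (hf1 b) (by omega),
        key k k (h a) (h b) (hh_im a) (hh_im b) (by omega)]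
    ring
end

section
/- Let A and B be commutative rings, I an ideal of A, J an ideal of B, k ≥ 1 an integer, and π : B → B ⧸ J^(k+1) the quotient map. Let f, g : I → B ⧸ J^(k+1) be additive and multiplicative maps whose images are contained in π(J), and suppose that f and g agree after composing with the natural projection B ⧸ J^(k+1) → B ⧸ J^k. Then the difference f − g has image contained in π(J^k) and vanishes on all products: (f − g)(a·b) = 0 for all a, b ∈ I. -/
/-! Since `f` and `g` agree modulo `J^k`, `f - g` takes values in `π(J^k)`. Then
`(f - g)(ab) = f(a) (f - g)(b) + g(b) (f - g)(a)` is a sum of products of an element of `π(J)`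
with one of `π(J^k)`, and such products vanish modulo `J^(k+1)`. -/

namespace Ideal.Quotient

variable {R : Type*} [CommRing R]

theorem sub_mem_image_mk_of_factor_eq {S T : Ideal R} (hST : S ≤ T) {x y : R ⧸ S}
    (h : factor hST x = factor hST y) : x - y ∈ mk S '' (T : Set R) := by
  obtain ⟨z, hz⟩ := mk_surjective (x - y)
  have hz0 : factor hST (mk S z) = 0 := by rw [hz, map_sub, h, sub_self]
  rw [factor_mk, eq_zero_iff_mem] at hz0
  exact ⟨z, hz0, hz⟩

theorem mul_eq_zero_of_mem_image_mk {J K L : Ideal R} (hJK : J * K ≤ L) {x y : R ⧸ L}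
    (hx : x ∈ mk L '' (J : Set R)) (hy : y ∈ mk L '' (K : Set R)) : x * y = 0 := by
  obtain ⟨u, hu, rfl⟩ := hx
  obtain ⟨v, hv, rfl⟩ := hy
  rw [← map_mul, eq_zero_iff_mem]
  exact hJK (mul_mem_mul hu hv)

end Ideal.Quotient

/-- Let `A`, `B` be commutative rings, `I ⊆ A`, `J ⊆ B`
ideals, `k ≥ 1`, and `π : B → B ⧸ J^(k+1)` the quotient map.  If
`f, g : I → B ⧸ J^(k+1)` are additive and multiplicative maps with images in
`π(J)` which agree after composing with the projection
`B ⧸ J^(k+1) → B ⧸ J^k`, then `f - g` has image in `π(J^k)` and vanishes on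
all products. -/
theorem stmt6
    (A B : Type*) [CommRing A] [CommRing B]
    (I : Ideal A) (J : Ideal B) (k : ℕ)
    (f g : ↥I → B ⧸ J ^ (k + 1))
    (hf_mul : ∀ a b : ↥I,
      f ⟨(a : A) * (b : A), I.mul_mem_left (a : A) b.2⟩ = f a * f b)
    (hf_im : ∀ a : ↥I, f a ∈ (Ideal.Quotient.mk (J ^ (k + 1))) '' (J : Set B))
    (hg_mul : ∀ a b : ↥I,
      g ⟨(a : A) * (b : A), I.mul_mem_left (a : A) b.2⟩ = g a * g b)
    (hg_im : ∀ a : ↥I, g a ∈ (Ideal.Quotient.mk (J ^ (k + 1))) '' (J : Set B))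
    (hfg : ∀ a : ↥I,
      Ideal.Quotient.factor (S := J ^ (k + 1)) (T := J ^ k)
        (Ideal.pow_le_pow_right (by omega)) (f a) =
      Ideal.Quotient.factor (S := J ^ (k + 1)) (T := J ^ k)
        (Ideal.pow_le_pow_right (by omega)) (g a)) :
    (∀ a : ↥I,
      (f - g) a ∈ (Ideal.Quotient.mk (J ^ (k + 1))) '' ((J ^ k : Ideal B) : Set B)) ∧
    (∀ a b : ↥I,
      (f - g) ⟨(a : A) * (b : A), I.mul_mem_left (a : A) b.2⟩ = 0) := by
  have hdiff : ∀ a,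
      (f - g) a ∈ Ideal.Quotient.mk (J ^ (k + 1)) '' ((J ^ k : Ideal B) : Set B) :=
    fun a => Ideal.Quotient.sub_mem_image_mk_of_factor_eq _ (hfg a)
  refine ⟨hdiff, fun a b => ?_⟩
  have hJ : J * J ^ k ≤ J ^ (k + 1) := (pow_succ' J k).ge
  calc (f - g) ⟨(a : A) * (b : A), I.mul_mem_left (a : A) b.2⟩
      = f a * (f - g) b + g b * (f - g) a := by
        simp only [Pi.sub_apply, hf_mul, hg_mul]
        ring
    _ = 0 := by
      rw [Ideal.Quotient.mul_eq_zero_of_mem_image_mk hJ (hf_im a) (hdiff b),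
        Ideal.Quotient.mul_eq_zero_of_mem_image_mk hJ (hg_im b) (hdiff a), add_zero]
end
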